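/- Safety of Rule 6⁺: let G be a connected signed graph, let v ∈ V(G), and let u₁, …, u_c be pairwise non-adjacent neighbors of v with c ≥ 2 such that G − {v, u₁, …, u_c} is connected. Let G' = G − {v, u₁, …, u_c}. If β(G') ≥ pt(G') + (k − c + 1)/4, then β(G) ≥ pt(G) + k/4. -/

import Mathlib

open SimpleGraph

/-- A signed graph `(G, sign)` is balanced: there is a bipartition (given by `f`)
such that an edge is positive (`sign = true`) iff its endpoints lie in the same part. -/
def IsBalancedSigned {V : Type*} (G : SimpleGraph V) (sign : V → V → Bool) : Prop :=
  ∃ f : V → Bool, ∀ u v, G.Adj u v → sign u v = (f u == f v)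

/-- `beta G sign` : the maximum number of edges of a balanced subgraph of `G`
(subgraphs inherit the signs). -/
noncomputable def beta {V : Type*} (G : SimpleGraph V) (sign : V → V → Bool) : ℕ :=
  sSup {m | ∃ H : SimpleGraph V, H ≤ G ∧ IsBalancedSigned H sign ∧ H.edgeSet.ncard = m}

/-- The Poljak–Turzík bound `pt(G) = m/2 + (n - t)/4`, where `t` is the number of
connected components. -/
noncomputable def pt {V : Type*} (G : SimpleGraph V) : ℚ :=
  (G.edgeSet.ncard : ℚ) / 2 +
    ((Nat.card V : ℚ) - (Nat.card G.ConnectedComponent : ℚ)) / 4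

/- ----------------------------------------------------------------- -/
/- Auxiliary material -/

section Aux

variable {V : Type*}

lemma aux_bddAbove [Finite V] (G : SimpleGraph V) (sign : V → V → Bool) :
    BddAbove {m | ∃ H : SimpleGraph V, H ≤ G ∧ IsBalancedSigned H sign ∧ H.edgeSet.ncard = m} := by
  refine ⟨G.edgeSet.ncard, ?_⟩
  rintro m ⟨H, hle, -, rfl⟩
  exact Set.ncard_le_ncard (edgeSet_mono hle) (Set.toFinite _)

lemma le_beta [Finite V] (G H : SimpleGraph V) (sign : V → V → Bool)
    (hle : H ≤ G) (hbal : IsBalancedSigned H sign) :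
    H.edgeSet.ncard ≤ beta G sign :=
  le_csSup (aux_bddAbove G sign) ⟨H, hle, hbal, rfl⟩

lemma beta_exists [Finite V] (G : SimpleGraph V) (sign : V → V → Bool) :
    ∃ H : SimpleGraph V, H ≤ G ∧ IsBalancedSigned H sign ∧ H.edgeSet.ncard = beta G sign := by
  have hne : {m | ∃ H : SimpleGraph V, H ≤ G ∧ IsBalancedSigned H sign ∧ H.edgeSet.ncard = m}.Nonempty := by
    refine ⟨0, ⊥, bot_le, ⟨fun _ => true, fun a b hab => absurd hab (by simp)⟩, ?_⟩
    simp
  exact Nat.sSup_mem hne (aux_bddAbove G sign)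

lemma card_cc_one (G : SimpleGraph V) (h : G.Connected) :
    Nat.card G.ConnectedComponent = 1 := by
  rw [Nat.card_eq_one_iff_unique]
  constructor
  · constructor
    intro a b
    refine ConnectedComponent.ind₂ (fun x y => ?_) a b
    exact ConnectedComponent.sound (h.preconnected x y)
  · exact ⟨G.connectedComponentMk h.nonempty.some⟩

/-- Subgraph of captured edges. -/
def Hsub (G : SimpleGraph V) (sign : V → V → Bool) (hsym : ∀ a b, sign a b = sign b a)
    (F : V → Bool) : SimpleGraph V where
  Adj x y := G.Adj x y ∧ sign x y = (F x == F y)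
  symm := by
    refine ⟨fun x y h => ?_⟩
    exact ⟨h.1.symm, by rw [← hsym x y, h.2, Bool.beq_comm]⟩
  loopless := by
    refine ⟨fun x h => ?_⟩
    exact G.irrefl h.1

@[simp] lemma Hsub_adj (G : SimpleGraph V) (sign : V → V → Bool)
    (hsym : ∀ a b, sign a b = sign b a) (F : V → Bool) (x y : V) :
    (Hsub G sign hsym F).Adj x y ↔ G.Adj x y ∧ sign x y = (F x == F y) := Iff.rfl

lemma Hsub_le (G : SimpleGraph V) (sign : V → V → Bool)
    (hsym : ∀ a b, sign a b = sign b a) (F : V → Bool) :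
    Hsub G sign hsym F ≤ G := by
  intro a b h
  exact h.1

lemma Hsub_balanced (G : SimpleGraph V) (sign : V → V → Bool)
    (hsym : ∀ a b, sign a b = sign b a) (F : V → Bool) :
    IsBalancedSigned (Hsub G sign hsym F) sign := ⟨F, fun _ _ h => h.2⟩

open Classical in
noncomputable def Fext (S : Set V) (sign : V → V → Bool) (v : V)
    (f' : ↥Sᶜ → Bool) (b : Bool) (x : V) : Bool :=
  if hx : x ∈ S then (if x = v then b else (b == sign v x)) else f' ⟨x, hx⟩

lemma Fext_v (S : Set V) (sign : V → V → Bool) (v : V) (f' : ↥Sᶜ → Bool) (b : Bool)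
    (hv : v ∈ S) :
    Fext S sign v f' b v = b := by
  simp [Fext, hv]

lemma Fext_of_mem_ne (S : Set V) (sign : V → V → Bool) (v : V) (f' : ↥Sᶜ → Bool) (b : Bool)
    {x : V} (hx : x ∈ S) (hxv : x ≠ v) :
    Fext S sign v f' b x = (b == sign v x) := by
  simp [Fext, hx, hxv]

lemma Fext_of_not_mem (S : Set V) (sign : V → V → Bool) (v : V) (f' : ↥Sᶜ → Bool) (b : Bool)
    {x : V} (hx : x ∉ S) :
    Fext S sign v f' b x = f' ⟨x, hx⟩ := by
  simp [Fext, hx]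

lemma Fext_flip (S : Set V) (sign : V → V → Bool) (v : V) (f' : ↥Sᶜ → Bool)
    {x : V} (hx : x ∈ S) :
    Fext S sign v f' true x = !(Fext S sign v f' false x) := by
  by_cases hxv : x = v
  · subst hxv
    rw [Fext_v S sign x f' true hx, Fext_v S sign x f' false hx]
    rfl
  · rw [Fext_of_mem_ne S sign v f' true hx hxv, Fext_of_mem_ne S sign v f' false hx hxv]
    cases sign v x <;> rfl

/-- Edges inside `Sᶜ`. -/
def Ein (S : Set V) (K : SimpleGraph V) : Set (Sym2 V) :=
  {e | e ∈ K.edgeSet ∧ ∀ x ∈ e, x ∉ S}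

/-- Edges inside `S`. -/
def Eon (S : Set V) (K : SimpleGraph V) : Set (Sym2 V) :=
  {e | e ∈ K.edgeSet ∧ ∀ x ∈ e, x ∈ S}

/-- Edges crossing between `S` and `Sᶜ`. -/
def Ecr (S : Set V) (K : SimpleGraph V) : Set (Sym2 V) :=
  {e | e ∈ K.edgeSet ∧ (∃ x ∈ e, x ∈ S) ∧ (∃ x ∈ e, x ∉ S)}

lemma edge_partition [Finite V] (S : Set V) (K : SimpleGraph V) :
    K.edgeSet.ncard = (Ein S K).ncard + (Eon S K).ncard + (Ecr S K).ncard := by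
  classical
  have hunion : K.edgeSet = (Ein S K ∪ Eon S K) ∪ Ecr S K := by
    ext e
    induction e using Sym2.ind with
    | _ a b =>
      simp only [Set.mem_union, Ein, Eon, Ecr, Set.mem_setOf_eq, Sym2.mem_iff]
      constructor
      · intro h
        by_cases ha : a ∈ S <;> by_cases hb : b ∈ S
        · exact Or.inl (Or.inr ⟨h, by rintro x (rfl | rfl) <;> assumption⟩)
        · exact Or.inr ⟨h, ⟨a, Or.inl rfl, ha⟩, ⟨b, Or.inr rfl, hb⟩⟩
        · exact Or.inr ⟨h, ⟨b, Or.inr rfl, hb⟩, ⟨a, Or.inl rfl, ha⟩⟩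
        · exact Or.inl (Or.inl ⟨h, by rintro x (rfl | rfl) <;> assumption⟩)
      · rintro ((⟨h, -⟩ | ⟨h, -⟩) | ⟨h, -⟩) <;> exact h
  have hd1 : Disjoint (Ein S K) (Eon S K) := by
    rw [Set.disjoint_left]
    rintro e ⟨he, hin⟩ ⟨-, hon⟩
    induction e using Sym2.ind with
    | _ a b => exact (hin a (Sym2.mem_mk_left a b)) (hon a (Sym2.mem_mk_left a b))
  have hd2 : Disjoint (Ein S K ∪ Eon S K) (Ecr S K) := by
    rw [Set.disjoint_left]
    rintro e (⟨-, hin⟩ | ⟨-, hon⟩) ⟨-, ⟨x, hxe, hxS⟩, ⟨y, hye, hyS⟩⟩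
    · exact (hin x hxe) hxS
    · exact hyS (hon y hye)
  rw [hunion, Set.ncard_union_eq hd2 (Set.toFinite _) (Set.toFinite _),
    Set.ncard_union_eq hd1 (Set.toFinite _) (Set.toFinite _)]

lemma ein_eq (S : Set V) (K : SimpleGraph V) :
    Ein S K = Sym2.map (Subtype.val : ↥Sᶜ → V) '' (K.induce Sᶜ).edgeSet := by
  ext e
  induction e using Sym2.ind with
  | _ a b =>
    simp only [Ein, Set.mem_setOf_eq, Sym2.mem_iff, Set.mem_image]
    constructor
    · rintro ⟨he, hmem⟩
      have ha : a ∈ Sᶜ := hmem a (Or.inl rfl)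
      have hb : b ∈ Sᶜ := hmem b (Or.inr rfl)
      refine ⟨s(⟨a, ha⟩, ⟨b, hb⟩), ?_, rfl⟩
      exact he
    · rintro ⟨e', he', hmap⟩
      induction e' using Sym2.ind with
      | _ p q =>
        simp only [Sym2.map_pair_eq] at hmap
        have hadj : K.Adj p.val q.val := he'
        rw [Sym2.eq_iff] at hmap
        rcases hmap with ⟨hp, hq⟩ | ⟨hp, hq⟩
        · subst hp; subst hq
          exact ⟨hadj, by rintro x (rfl | rfl) <;> [exact p.2; exact q.2]⟩
        · subst hp; subst hq
          exact ⟨hadj.symm, by rintro x (rfl | rfl) <;> [exact q.2; exact p.2]⟩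

lemma ein_ncard [Finite V] (S : Set V) (K : SimpleGraph V) :
    (Ein S K).ncard = (K.induce Sᶜ).edgeSet.ncard := by
  rw [ein_eq, Set.ncard_image_of_injective _ (Sym2.map.injective Subtype.val_injective)]

end Aux

/-- safety of Rule 6⁺: if `v` has `c ≥ 2` pairwise non-adjacent neighbors
`u 0, …, u (c-1)` such that `G - ({v} ∪ {u i})` is connected, and the reduced graph `G'`
satisfies `β(G') ≥ pt(G') + (k - c + 1)/4`, then `β(G) ≥ pt(G) + k/4`. -/
theorem stmt7 {V : Type*} [Fintype V] (G : SimpleGraph V) (sign : V → V → Bool)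
    (hsym : ∀ u v, sign u v = sign v u)
    (hconn : G.Connected)
    (v : V) (c : ℕ) (hc : 2 ≤ c)
    (u : Fin c → V) (hinj : Function.Injective u)
    (hnbr : ∀ i, G.Adj v (u i))
    (hnonadj : ∀ i j, i ≠ j → ¬ G.Adj (u i) (u j))
    (S : Set V) (hS : S = {v} ∪ Set.range u)
    (hconn' : (G.induce Sᶜ).Connected)
    (k : ℤ)
    (hbeta' : pt (G.induce Sᶜ) + ((k : ℚ) - (c : ℚ) + 1) / 4
        ≤ (beta (G.induce Sᶜ) (fun a b => sign a.val b.val) : ℚ)) :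
    pt G + (k : ℚ) / 4 ≤ (beta G sign : ℚ) := by
  classical
  have hne : ∀ i, v ≠ u i := fun i => (hnbr i).ne
  have hvS : v ∈ S := by rw [hS]; exact Or.inl rfl
  have huS : ∀ i, u i ∈ S := fun i => by rw [hS]; exact Or.inr ⟨i, rfl⟩
  -- |S| = c + 1
  have hScard : S.ncard = c + 1 := by
    rw [hS, Set.ncard_union_eq (by
        rw [Set.disjoint_left]
        rintro x rfl ⟨i, hi⟩
        exact hne i hi.symm) (Set.toFinite _) (Set.toFinite _),
      Set.ncard_singleton, ← Set.image_univ,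
      Set.ncard_image_of_injective _ hinj, Set.ncard_univ]
    simp [Nat.add_comm]
  -- optimal balanced subgraph of the reduced graph
  obtain ⟨H', hH'le, ⟨f', hf'⟩, hH'card⟩ :=
    beta_exists (G.induce Sᶜ) (fun a b : ↥Sᶜ => sign a.val b.val)
  -- the family of extensions
  set F : Bool → V → Bool := Fext S sign v f' with hF
  set Hb : Bool → SimpleGraph V := fun b => Hsub G sign hsym (F b) with hHb
  -- edges inside S are exactly the c edges v - u i, for G and for each Hb
  have heonG : Eon S G = Set.range (fun i : Fin c => s(v, u i)) := by
    ext e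
    induction e using Sym2.ind with
    | _ a b =>
      simp only [Eon, Set.mem_setOf_eq, Sym2.mem_iff, Set.mem_range, mem_edgeSet]
      constructor
      · rintro ⟨hadj, hmem⟩
        have ha : a ∈ S := hmem a (Or.inl rfl)
        have hb : b ∈ S := hmem b (Or.inr rfl)
        rw [hS] at ha hb
        rcases ha with rfl | ⟨i, rfl⟩ <;> rcases hb with hbv | ⟨j, rfl⟩
        · exact absurd hbv.symm hadj.ne
        · exact ⟨j, rfl⟩
        · subst hbv; exact ⟨i, Sym2.eq_swap⟩
        · rcases eq_or_ne i j with rfl | hij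
          · exact absurd rfl hadj.ne
          · exact absurd hadj (hnonadj i j hij)
      · rintro ⟨i, hi⟩
        rw [Sym2.eq_iff] at hi
        rcases hi with ⟨rfl, rfl⟩ | ⟨rfl, rfl⟩
        · exact ⟨hnbr i, by rintro x (rfl | rfl) <;> [exact hvS; exact huS i]⟩
        · exact ⟨(hnbr i).symm, by rintro x (rfl | rfl) <;> [exact huS i; exact hvS]⟩
  have heonG_card : (Eon S G).ncard = c := by
    rw [heonG, ← Set.image_univ, Set.ncard_image_of_injective _ ?hi, Set.ncard_univ]
    · simp
    case hi =>
      intro i j hij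
      simp only [Sym2.eq_iff] at hij
      rcases hij with ⟨-, h⟩ | ⟨h, -⟩
      · exact hinj h
      · exact absurd h (hne j)
  -- all c edges v - u i are captured by both extensions
  have hcap : ∀ (b : Bool) (i : Fin c), (Hb b).Adj v (u i) := by
    intro b i
    refine ⟨hnbr i, ?_⟩
    have h1 : F b v = b := by
      rw [hF]; exact Fext_v S sign v f' b hvS
    have h2 : F b (u i) = (b == sign v (u i)) := by
      rw [hF]; exact Fext_of_mem_ne S sign v f' b (huS i) (Ne.symm (hne i))
    rw [h1, h2]
    cases b <;> cases sign v (u i) <;> rfl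
  have heonH : ∀ b, Eon S (Hb b) = Eon S G := by
    intro b
    apply Set.Subset.antisymm
    · rintro e ⟨he, hmem⟩
      exact ⟨edgeSet_mono (Hsub_le G sign hsym (F b)) he, hmem⟩
    · intro e he
      rw [heonG] at he
      obtain ⟨i, rfl⟩ := he
      refine ⟨(hcap b i : (Hb b).Adj v (u i)), ?_⟩
      rintro x hx
      rw [Sym2.mem_iff] at hx
      rcases hx with rfl | rfl
      · exact hvS
      · exact huS i
  -- inside edges: each Hb contains at least beta(G') edges inside Sᶜ
  have heinH : ∀ b, beta (G.induce Sᶜ) (fun a b : ↥Sᶜ => sign a.val b.val) ≤ (Ein S (Hb b)).ncard := by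
    intro b
    rw [ein_ncard]
    rw [← hH'card]
    refine Set.ncard_le_ncard (edgeSet_mono ?_) (Set.toFinite _)
    intro a b' hab
    have hind : G.Adj a.val b'.val := hH'le hab
    have hsgn : sign a.val b'.val = (f' a == f' b') := hf' a b' hab
    have h1 : F b a.val = f' a := by
      rw [hF, Fext_of_not_mem S sign v f' b a.2]
    have h2 : F b b'.val = f' b' := by
      rw [hF, Fext_of_not_mem S sign v f' b b'.2]
    show G.Adj a.val b'.val ∧ sign a.val b'.val = (F b a.val == F b b'.val)
    rw [h1, h2]
    exact ⟨hind, hsgn⟩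
  -- cross edges: the two extensions capture complementary sets of cross edges
  have hboole : ∀ (s a a' q : Bool), a' = !a → ((s = (a' == q)) ↔ ¬ (s = (a == q))) := by decide
  have hcrmono : ∀ b, Ecr S (Hb b) ⊆ Ecr S G := by
    rintro b e ⟨he, hx⟩
    exact ⟨edgeSet_mono (Hsub_le G sign hsym (F b)) he, hx⟩
  have hmain : ∀ p q : V, G.Adj p q → p ∈ S → q ∉ S →
      (s(p, q) ∈ Ecr S (Hb true) ↔ s(p, q) ∉ Ecr S (Hb false)) := by
    intro p q hadj hp hq
    have hflip : F true p = !(F false p) := by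
      rw [hF]; exact Fext_flip S sign v f' hp
    have hsame : F true q = F false q := by
      rw [hF, Fext_of_not_mem S sign v f' true hq, Fext_of_not_mem S sign v f' false hq]
    have hmemT : ∀ b, (s(p, q) ∈ Ecr S (Hb b) ↔ sign p q = (F b p == F b q)) := by
      intro b
      constructor
      · rintro ⟨hadj', -⟩
        exact hadj'.2
      · intro hcond
        exact ⟨(⟨hadj, hcond⟩ : (Hb b).Adj p q), ⟨p, Sym2.mem_mk_left p q, hp⟩,
          ⟨q, Sym2.mem_mk_right p q, hq⟩⟩
    rw [hmemT true, hmemT false, hsame]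
    exact hboole _ _ _ _ hflip
  have hcriff : ∀ e ∈ Ecr S G, (e ∈ Ecr S (Hb true) ↔ e ∉ Ecr S (Hb false)) := by
    intro e he
    induction e using Sym2.ind with
    | _ p q =>
      obtain ⟨hadj, ⟨x, hxe, hxS⟩, ⟨y, hye, hyS⟩⟩ := he
      rw [mem_edgeSet] at hadj
      rw [Sym2.mem_iff] at hxe hye
      rcases hxe with rfl | rfl <;> rcases hye with rfl | rfl
      · exact absurd hxS hyS
      · exact hmain x y hadj hxS hyS
      · have := hmain x y hadj.symm hxS hyS
        rwa [Sym2.eq_swap] at this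
      · exact absurd hxS hyS
  have hcrsum : (Ecr S (Hb true)).ncard + (Ecr S (Hb false)).ncard = (Ecr S G).ncard := by
    rw [← Set.ncard_union_eq ?hd (Set.toFinite _) (Set.toFinite _)]
    · congr 1
      apply Set.Subset.antisymm
      · rintro e (he | he)
        · exact hcrmono true he
        · exact hcrmono false he
      · intro e he
        by_cases hf : e ∈ Ecr S (Hb false)
        · exact Or.inr hf
        · exact Or.inl ((hcriff e he).2 hf)
    case hd =>
      rw [Set.disjoint_left]
      intro e het hef
      exact (hcriff e (hcrmono true het)).1 het hef
  -- pick the better flip bit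
  obtain ⟨b, hb2⟩ : ∃ b : Bool, (Ecr S G).ncard ≤ 2 * (Ecr S (Hb b)).ncard := by
    rcases le_total (Ecr S (Hb true)).ncard (Ecr S (Hb false)).ncard with h | h
    · exact ⟨false, by omega⟩
    · exact ⟨true, by omega⟩
  -- the key lower bound on beta G
  set β' := beta (G.induce Sᶜ) (fun a b : ↥Sᶜ => sign a.val b.val) with hβ'
  have hkey : β' + c + (Ecr S (Hb b)).ncard ≤ beta G sign := by
    have h1 : β' + c + (Ecr S (Hb b)).ncard ≤ (Hb b).edgeSet.ncard := by
      rw [edge_partition S (Hb b), heonH b, heonG_card]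
      have := heinH b
      omega
    exact le_trans h1 (le_beta G (Hb b) sign (Hsub_le G sign hsym (F b))
      (Hsub_balanced G sign hsym (F b)))
  -- edge and vertex counts
  have hmG : G.edgeSet.ncard = (G.induce Sᶜ).edgeSet.ncard + c + (Ecr S G).ncard := by
    rw [edge_partition S G, heonG_card, ein_ncard]
  have hnV : (Nat.card ↥Sᶜ) + (c + 1) = Nat.card V := by
    rw [Nat.card_coe_set_eq, ← hScard, Nat.add_comm]
    exact Set.ncard_add_ncard_compl S
  -- connected component counts
  have hccG : Nat.card G.ConnectedComponent = 1 := card_cc_one G hconn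
  have hccG' : Nat.card (G.induce Sᶜ).ConnectedComponent = 1 := card_cc_one _ hconn'
  -- final arithmetic
  rw [pt, hccG]
  rw [pt, hccG'] at hbeta'
  have hkeyQ : (β' : ℚ) + c + ((Ecr S (Hb b)).ncard : ℚ) ≤ (beta G sign : ℚ) := by
    exact_mod_cast hkey
  have hb2Q : ((Ecr S G).ncard : ℚ) ≤ 2 * ((Ecr S (Hb b)).ncard : ℚ) := by
    exact_mod_cast hb2
  have hmGQ : (G.edgeSet.ncard : ℚ)
      = ((G.induce Sᶜ).edgeSet.ncard : ℚ) + c + ((Ecr S G).ncard : ℚ) := by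
    exact_mod_cast hmG
  have hnVQ : ((Nat.card ↥Sᶜ : ℕ) : ℚ) + ((c : ℚ) + 1) = ((Nat.card V : ℕ) : ℚ) := by
    exact_mod_cast hnV
  linarith
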